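/- For every nonnegative integer s and every B ∈ [0,1], the following implication holds for real numbers x, y, a: if 0 ≤ y ≤ 1, a ≥ 0, and x·y ≤ a + B·x, then x·y^s ≤ s·a + B^s·x. -/

import Mathlib

theorem mul_pow_le_natCast_mul_add_pow_mul {R : Type*} [CommRing R] [LinearOrder R]
    [IsStrictOrderedRing R] {B x y a : R} (hB0 : 0 ≤ B) (hB1 : B ≤ 1) (hy0 : 0 ≤ y)
    (hy1 : y ≤ 1) (ha : 0 ≤ a) (h : x * y ≤ a + B * x) :
    ∀ s : ℕ, x * y ^ s ≤ s * a + B ^ s * x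
  | 0 => by simp
  | n + 1 => by
    have ih := mul_pow_le_natCast_mul_add_pow_mul hB0 hB1 hy0 hy1 ha h n
    have hna : 0 ≤ (n : R) * a := mul_nonneg n.cast_nonneg ha
    calc x * y ^ (n + 1) = (x * y) * y ^ n := by ring
      _ ≤ (a + B * x) * y ^ n := mul_le_mul_of_nonneg_right h (pow_nonneg hy0 n)
      _ = a * y ^ n + B * (x * y ^ n) := by ring
      _ ≤ a + B * (n * a + B ^ n * x) := by
        gcongr
        exact mul_le_of_le_one_right ha (pow_le_one₀ hy0 hy1)
      _ = a + B * (n * a) + B ^ (n + 1) * x := by ring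
      _ ≤ a + n * a + B ^ (n + 1) * x := by
        grw [mul_le_of_le_one_left hna hB1]
      _ = (n + 1 : ℕ) * a + B ^ (n + 1) * x := by push_cast; ring

theorem stmt11 (s : ℕ) (B x y a : ℝ) (hB : B ∈ Set.Icc (0 : ℝ) 1)
    (hy0 : 0 ≤ y) (hy1 : y ≤ 1) (ha : 0 ≤ a) (h : x * y ≤ a + B * x) :
    x * y ^ s ≤ s * a + B ^ s * x :=
  mul_pow_le_natCast_mul_add_pow_mul hB.1 hB.2 hy0 hy1 ha h s
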